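/- Let F be a finite field and let α, β ∈ F⟦X⟧ be power series expansions of rational functions, i.e., suppose there exist polynomials h, p, h', p' ∈ F[X] with h(0) ≠ 0, h'(0) ≠ 0, h·α = p and h'·β = p' in F⟦X⟧, and suppose additionally that α has nonzero constant term. Then the tree automorphism AffMap(α, β) ∈ Aut(T_F) is finite-state. -/

import Mathlib

namespace RoverNekrashevych

/-- The state (section) of `f` at the word `u`. -/
def state {X : Type*} (f : List X → List X) (u : List X) : List X → List X :=
  fun w => (f (u ++ w)).drop u.length

/-- A function on words is finite-state if it has only finitely many states. -/
def FiniteStateFun {X : Type*} (f : List X → List X) : Prop :=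
  Set.Finite {g : List X → List X | ∃ u : List X, g = state f u}

/-- The truncated power series `Σ_{i < length w} w_i X^i` determined by a word. -/
noncomputable def wordToSeries {F : Type*} [CommSemiring F] (w : List F) : PowerSeries F :=
  PowerSeries.mk fun i => w.getD i 0

/-- The affine map `AffMap (α, β)` on words: it sends `(c_0, …, c_{e-1})` to the word of
the first `e` coefficients of `α · (Σ_{i<e} c_i X^i) + β`. -/
noncomputable def affWord {F : Type*} [CommSemiring F] (α β : PowerSeries F) (w : List F) :
    List F :=
  List.ofFn fun i : Fin w.length => PowerSeries.coeff i (α * wordToSeries w + β)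

/-!
The state of `AffMap (α, β)` at a word `u` is `AffMap (α, β_u)`, where `β_u` is `α·u + β` with its
first `|u|` coefficients dropped. If `Q α = A` and `Q β = B` with polynomials `Q ≠ 0`, `A`, `B`,
then beyond degree `deg Q` the coefficients of `Q β_u` are those of `A·u + B` shifted by `|u|`,
and these vanish beyond `max (deg A) (deg B)`. So every `Q β_u` is a polynomial of bounded
degree; over a finite field there are finitely many, and multiplication by `Q` is injective.
-/

open PowerSeries

section CommSemiring

variable {R : Type*} [CommSemiring R]

noncomputable def shift (e : ℕ) (γ : R⟦X⟧) : R⟦X⟧ :=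
  mk fun n => coeff (e + n) γ

@[simp]
lemma coeff_shift (e n : ℕ) (γ : R⟦X⟧) : coeff n (shift e γ) = coeff (e + n) γ := by
  simp [shift]

lemma trunc_add_X_pow_mul_shift (e : ℕ) (γ : R⟦X⟧) :
    ((trunc e γ : Polynomial R) : R⟦X⟧) + X ^ e * shift e γ = γ := by
  ext n
  rw [map_add, Polynomial.coeff_coe, coeff_trunc, coeff_X_pow_mul']
  by_cases hn : n < e
  · simp [hn, Nat.not_le.2 hn]
  · simp [hn, Nat.le_of_not_lt hn]

lemma coeff_coe_mul_eq_zero {A : Polynomial R} {φ : R⟦X⟧} {k m : ℕ}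
    (hφ : ∀ i, k ≤ i → coeff i φ = 0) (hm : A.natDegree + k ≤ m) :
    coeff m ((A : R⟦X⟧) * φ) = 0 := by
  rw [coeff_mul]
  refine Finset.sum_eq_zero fun ⟨i, j⟩ hij => ?_
  rw [Finset.HasAntidiagonal.mem_antidiagonal] at hij
  by_cases hi : i ≤ A.natDegree
  · rw [hφ j (by omega), mul_zero]
  · rw [Polynomial.coeff_coe, Polynomial.coeff_eq_zero_of_natDegree_lt (by omega), zero_mul]

lemma coeff_coe_mul_shift {Q : Polynomial R} (e : ℕ) (γ : R⟦X⟧) {n : ℕ}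
    (hn : Q.natDegree ≤ n) :
    coeff n ((Q : R⟦X⟧) * shift e γ) = coeff (e + n) ((Q : R⟦X⟧) * γ) := by
  have htrunc : coeff (e + n) ((Q : R⟦X⟧) * ((trunc e γ : Polynomial R) : R⟦X⟧)) = 0 :=
    coeff_coe_mul_eq_zero (k := e)
      (fun _ hi => by rw [Polynomial.coeff_coe, coeff_trunc, if_neg (by omega)]) (by omega)
  conv_rhs => rw [← trunc_add_X_pow_mul_shift e γ]
  rw [mul_add, map_add, htrunc, zero_add, mul_left_comm, add_comm, coeff_X_pow_mul]

lemma coeff_wordToSeries_of_length_le (w : List R) {n : ℕ} (hn : w.length ≤ n) :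
    coeff n (wordToSeries w) = 0 := by
  simp [wordToSeries, List.getD, List.getElem?_eq_none hn]

lemma wordToSeries_append (u w : List R) :
    wordToSeries (u ++ w) = wordToSeries u + X ^ u.length * wordToSeries w := by
  ext n
  rw [map_add, coeff_X_pow_mul']
  simp only [wordToSeries, coeff_mk]
  by_cases hn : n < u.length
  · rw [if_neg (by omega), List.getD_append _ _ _ _ hn, add_zero]
  · have hn : u.length ≤ n := by omega
    rw [if_pos hn, List.getD_eq_default _ _ hn, zero_add, List.getD_append_right _ _ _ _ hn]

lemma state_affWord (α β : R⟦X⟧) (u : List R) :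
    state (affWord α β) u = affWord α (shift u.length (α * wordToSeries u + β)) := by
  funext w
  apply List.ext_getElem
  · simp [state, affWord]
  intro n _ _
  simp only [state, affWord, List.getElem_drop, List.getElem_ofFn]
  rw [wordToSeries_append, mul_add, mul_left_comm]
  simp only [map_add, coeff_shift, add_comm u.length n, coeff_X_pow_mul]
  ring

end CommSemiring

lemma finite_setOf_coeff_eq_zero (R : Type*) [CommSemiring R] [Finite R] (D : ℕ) :
    {δ : R⟦X⟧ | ∀ n, D < n → coeff n δ = 0}.Finite := by
  rw [← Set.finite_coe_iff]
  refine Finite.of_injective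
    (fun (δ : {δ : R⟦X⟧ | ∀ n, D < n → coeff n δ = 0}) (i : Fin (D + 1)) => coeff i δ.1) ?_
  rintro ⟨δ₁, h₁⟩ ⟨δ₂, h₂⟩ hδ
  ext n : 3
  by_cases hn : n ≤ D
  · simpa using congrFun hδ ⟨n, by omega⟩
  · rw [h₁ n (by omega), h₂ n (by omega)]

lemma finite_setOf_coeff_coe_mul_eq_zero {R : Type*} [CommRing R] [IsDomain R] [Finite R]
    {Q : Polynomial R} (hQ : Q ≠ 0) (D : ℕ) :
    {γ : R⟦X⟧ | ∀ n, D < n → coeff n ((Q : R⟦X⟧) * γ) = 0}.Finite :=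
  (finite_setOf_coeff_eq_zero R D).preimage
    (mul_right_injective₀ (Polynomial.coe_eq_zero_iff.not.2 hQ)).injOn

theorem finiteStateFun_affWord_of_coe_mul_eq {R : Type*} [CommRing R] [IsDomain R] [Finite R]
    (α β : R⟦X⟧) {Q A B : Polynomial R} (hQ : Q ≠ 0)
    (hα : (Q : R⟦X⟧) * α = A) (hβ : (Q : R⟦X⟧) * β = B) :
    FiniteStateFun (affWord α β) := by
  set D := max Q.natDegree (max A.natDegree B.natDegree)
  have hbound : ∀ u : List R, ∀ n, D < n →
      coeff n ((Q : R⟦X⟧) * shift u.length (α * wordToSeries u + β)) = 0 := by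
    intro u n hn
    have hexpand : (Q : R⟦X⟧) * (α * wordToSeries u + β) = A * wordToSeries u + B := by
      rw [← hα, ← hβ]
      ring
    rw [coeff_coe_mul_shift _ _ (by omega), hexpand, map_add,
      coeff_coe_mul_eq_zero (fun _ => coeff_wordToSeries_of_length_le u) (by omega),
      Polynomial.coeff_coe, Polynomial.coeff_eq_zero_of_natDegree_lt (by omega), add_zero]
  refine ((finite_setOf_coeff_coe_mul_eq_zero hQ D).image (affWord α)).subset ?_
  rintro g ⟨u, rfl⟩
  exact ⟨_, hbound u, (state_affWord α β u).symm⟩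

theorem affMap_finiteState_of_rational_general {F : Type*} [Field F] [Fintype F]
    (α β : PowerSeries F)
    (h p h' p' : Polynomial F) (hh : h.eval 0 ≠ 0) (hh' : h'.eval 0 ≠ 0)
    (hαrat : (h : PowerSeries F) * α = (p : PowerSeries F))
    (hβrat : (h' : PowerSeries F) * β = (p' : PowerSeries F)) :
    FiniteStateFun (affWord α β) := by
  have hne : ∀ {g : Polynomial F}, g.eval 0 ≠ 0 → g ≠ 0 := fun hg h0 => hg (by simp [h0])
  refine finiteStateFun_affWord_of_coe_mul_eq α β (Q := h * h') (A := h' * p) (B := h * p')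
    (mul_ne_zero (hne hh) (hne hh')) ?_ ?_
  · rw [Polynomial.coe_mul, Polynomial.coe_mul, ← hαrat]
    ring
  · rw [Polynomial.coe_mul, Polynomial.coe_mul, ← hβrat]
    ring

/-- Let `F` be a finite field and `α, β ∈ F⟦X⟧` power series expansions of
rational functions (i.e. `h·α` and `h'·β` are polynomials for polynomials `h, h'` with
nonzero constant term), with `α` having nonzero constant term.  Then the tree automorphism
`AffMap (α, β) ∈ Aut(T_F)` is finite-state. -/
theorem affMap_finiteState_of_rational {F : Type*} [Field F] [Fintype F]
    (α β : PowerSeries F) (hα0 : PowerSeries.constantCoeff α ≠ 0)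
    (h p h' p' : Polynomial F) (hh : h.eval 0 ≠ 0) (hh' : h'.eval 0 ≠ 0)
    (hαrat : (h : PowerSeries F) * α = (p : PowerSeries F))
    (hβrat : (h' : PowerSeries F) * β = (p' : PowerSeries F)) :
    FiniteStateFun (affWord α β) :=
  affMap_finiteState_of_rational_general α β h p h' p' hh hh' hαrat hβrat

end RoverNekrashevych
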